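/- Let F be a one-dimensional commutative formal group law over a commutative ring R with formal inverse ι, and let σ be the R-algebra automorphism of R[[x,y]] exchanging x and y. Then for every f ∈ R[[x,y]], the element f·(y -_F x) + σ(f)·(x -_F y) is divisible by (x -_F y)·(y -_F x) in R[[x,y]]. (This expresses that the formal divided difference operator C(f) = f/(x -_F y) + σ(f)/(y -_F x) maps power series to power series.) -/

import Mathlib

/-!
Formal group law preliminaries: substitution of (multivariate) formal power series,
the definition of a one-dimensional commutative formal group law, its formal inverse,
and the formal difference `x -_F y := F(x, ι(y))`.
-/

noncomputable section

open MvPowerSeries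

/-- Substitution `f(a 0, a 1, …)` of multivariate power series (the intended use is when
each `a i` has zero constant coefficient): the coefficient at `e` only receives
contributions from monomials of `f` with exponent `d` such that each `d i` is at most the
total degree of `e`. -/
def MvPowerSeries.substSeries {σ τ R : Type*} [Fintype σ] [DecidableEq σ] [CommRing R]
    (a : σ → MvPowerSeries τ R) (f : MvPowerSeries σ R) : MvPowerSeries τ R :=
  fun e => ∑ d ∈ Finset.Iic (Finsupp.equivFunOnFinite.symm fun _ : σ => e.sum fun _ n => n),
    MvPowerSeries.coeff d f * MvPowerSeries.coeff e (∏ i, (a i) ^ d i)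

/-- A one-dimensional commutative formal group law over a commutative ring `R`:
a power series `F ∈ R[[x,y]]` with `F(x,0) = x`, `F(0,y) = y`, `F(x,y) = F(y,x)` and
`F(F(x,y),z) = F(x,F(y,z))` (an identity of power series in `R[[x,y,z]]`). -/
structure IsFormalGroupLaw (R : Type*) [CommRing R] (F : MvPowerSeries (Fin 2) R) : Prop where
  subst_zero_right :
    MvPowerSeries.substSeries (![X 0, 0] : Fin 2 → MvPowerSeries (Fin 2) R) F = X 0
  subst_zero_left :
    MvPowerSeries.substSeries (![0, X 1] : Fin 2 → MvPowerSeries (Fin 2) R) F = X 1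
  comm :
    MvPowerSeries.substSeries (![X 1, X 0] : Fin 2 → MvPowerSeries (Fin 2) R) F = F
  assoc :
    MvPowerSeries.substSeries
      (![MvPowerSeries.substSeries (![X 0, X 1] : Fin 2 → MvPowerSeries (Fin 3) R) F, X 2] :
        Fin 2 → MvPowerSeries (Fin 3) R) F
    = MvPowerSeries.substSeries
      (![X 0, MvPowerSeries.substSeries (![X 1, X 2] : Fin 2 → MvPowerSeries (Fin 3) R) F] :
        Fin 2 → MvPowerSeries (Fin 3) R) F

/-- `ι` is the formal inverse of the formal group law `F`: a univariate power series with
zero constant term such that `F(x, ι(x)) = 0`. -/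
def IsFormalInverse {R : Type*} [CommRing R] (F : MvPowerSeries (Fin 2) R)
    (ι : PowerSeries R) : Prop :=
  PowerSeries.constantCoeff ι = 0 ∧
    MvPowerSeries.substSeries (![PowerSeries.X, ι] : Fin 2 → PowerSeries R) F = 0

/-- The formal difference `x -_F y := F(x, ι(y))`. -/
def fDiff {R : Type*} [CommRing R] (F : MvPowerSeries (Fin 2) R) (ι : PowerSeries R) :
    MvPowerSeries (Fin 2) R :=
  MvPowerSeries.substSeries
    (![X 0, MvPowerSeries.substSeries (fun _ : Unit => (X 1 : MvPowerSeries (Fin 2) R)) ι] :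
      Fin 2 → MvPowerSeries (Fin 2) R) F

/-- The formal difference `y -_F x := F(y, ι(x))`. -/
def fDiffSwap {R : Type*} [CommRing R] (F : MvPowerSeries (Fin 2) R) (ι : PowerSeries R) :
    MvPowerSeries (Fin 2) R :=
  MvPowerSeries.substSeries
    (![X 1, MvPowerSeries.substSeries (fun _ : Unit => (X 0 : MvPowerSeries (Fin 2) R)) ι] :
      Fin 2 → MvPowerSeries (Fin 2) R) F


/-!
Write `u := x -_F y`. On the diagonal `u(t, t) = F(t, ι(t)) = 0`, so `u = (x - y)·a`; and
`u(x, 0) = F(x, 0) = x` forces `a(x, 0) = 1`, so `a` is a unit. Then `σ(u) = (y - x)·σ(a)` and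
`f·σ(u) + σ(f)·u = (x - y)·(σ(f)·a - f·σ(a))`, where the second factor again vanishes on the
diagonal and so equals `(x - y)·c`. Hence the sum is `(x - y)²·c`, a multiple of
`u·σ(u) = -(x - y)²·a·σ(a)`.

A series vanishing on the diagonal is divisible by `x - y`: after the shear `x ↦ x + y` it
vanishes at `x = 0`, hence is divisible by `x`. The computations run in Mathlib's
`MvPowerSeries.subst`, which agrees with `substSeries` on families with zero constant terms.
-/

namespace MvPowerSeries

section

variable {σ τ R : Type*} [CommRing R]

theorem coeff_prod_pow_eq_zero_of_degree_lt {a : σ → MvPowerSeries τ R}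
    (ha : ∀ i, constantCoeff (a i) = 0) {d : σ →₀ ℕ} {e : τ →₀ ℕ} {i : σ}
    (h : e.degree < d i) : coeff e (d.prod fun s n => a s ^ n) = 0 := by
  apply coeff_of_lt_order
  have hi : i ∈ d.support := Finsupp.mem_support_iff.mpr (by omega)
  calc (e.degree : ℕ∞) < d i := by exact_mod_cast h
    _ ≤ (a i ^ d i).order := le_order_pow_of_constantCoeff_eq_zero _ (ha i)
    _ ≤ ∑ s ∈ d.support, (a s ^ d s).order :=
      Finset.single_le_sum (f := fun s => (a s ^ d s).order) (fun _ _ => zero_le) hi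
    _ ≤ _ := le_order_prod _ _

theorem substSeries_eq_subst [Fintype σ] [DecidableEq σ] {a : σ → MvPowerSeries τ R}
    (ha : ∀ i, constantCoeff (a i) = 0) (f : MvPowerSeries σ R) :
    substSeries a f = subst a f := by
  ext e
  rw [coeff_subst (hasSubst_of_constantCoeff_zero ha), finsum_eq_sum_of_support_subset _ ?_]
  · refine Finset.sum_congr rfl fun d _ => ?_
    rw [smul_eq_mul, Finsupp.prod_fintype _ _ (fun _ => pow_zero _)]
  · intro d hd
    by_contra hle
    simp only [Finset.coe_Iic, Set.mem_Iic, Finsupp.le_def, not_forall, not_le] at hle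
    obtain ⟨i, hi⟩ := hle
    exact hd (by simp only [coeff_prod_pow_eq_zero_of_degree_lt ha (i := i) hi, smul_zero])

theorem X_dvd_sub_rescale_update_zero [DecidableEq σ] (f : MvPowerSeries σ R) (i : σ) :
    X i ∣ f - rescale (Function.update 1 i 0) f := by
  refine X_dvd_iff.mpr fun m hm => ?_
  have hprod : (m.prod fun s k => Function.update (1 : σ → R) i 0 s ^ k) = 1 :=
    Finset.prod_eq_one fun s hs => by
      dsimp only
      rw [Function.update_of_ne (by rintro rfl; exact Finsupp.mem_support_iff.mp hs hm),
        Pi.one_apply, one_pow]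
  rw [map_sub, coeff_rescale, hprod, one_mul, sub_self]

end

section TwoVariables

variable {R : Type*} [CommRing R]

theorem hasSubst_diag : HasSubst (fun _ : Fin 2 => (PowerSeries.X : PowerSeries R)) :=
  hasSubst_of_constantCoeff_zero fun _ => PowerSeries.constantCoeff_X

theorem hasSubst_const_X {τ : Type*} [Finite τ] (i : Fin 2) :
    HasSubst (fun _ : τ => (X i : MvPowerSeries (Fin 2) R)) :=
  hasSubst_of_constantCoeff_zero fun _ => constantCoeff_X i

def diag : MvPowerSeries (Fin 2) R →ₐ[R] PowerSeries R := substAlgHom hasSubst_diag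

def swap : MvPowerSeries (Fin 2) R →ₐ[R] MvPowerSeries (Fin 2) R :=
  substAlgHom (HasSubst.X_X (i := 1) (j := 0))

theorem diag_apply (f : MvPowerSeries (Fin 2) R) :
    diag f = subst (fun _ => PowerSeries.X) f := substAlgHom_apply _ f

theorem swap_apply (f : MvPowerSeries (Fin 2) R) :
    swap f = subst ![X 1, X 0] f := substAlgHom_apply _ f

theorem diag_swap (f : MvPowerSeries (Fin 2) R) : diag (swap f) = diag f := by
  rw [diag_apply, diag_apply, swap_apply, subst_comp_subst_apply HasSubst.X_X hasSubst_diag]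
  congr 1
  funext s
  fin_cases s <;> simp [subst_X hasSubst_diag]

theorem rescale_update_one_zero_eq_subst (f : MvPowerSeries (Fin 2) R) :
    rescale (Function.update 1 1 0) f = subst ![X 0, 0] f := by
  rw [rescale_eq_subst]
  congr 1
  funext s
  fin_cases s <;> simp

theorem subst_const_X_eq_subst_diag (f : MvPowerSeries (Fin 2) R) (i : Fin 2) :
    subst (fun _ => X i) f =
      subst (fun _ : Unit => (X i : MvPowerSeries (Fin 2) R)) (diag f) := by
  rw [diag_apply, subst_comp_subst_apply hasSubst_diag (hasSubst_const_X i)]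
  congr 1
  funext s
  exact (subst_X (hasSubst_const_X i) ()).symm

theorem X_sub_X_dvd_of_diag_eq_zero {w : MvPowerSeries (Fin 2) R} (hw : diag w = 0) :
    X 0 - X 1 ∣ w := by
  let shear : Fin 2 → MvPowerSeries (Fin 2) R := ![X 0 + X 1, X 1]
  let unshear : Fin 2 → MvPowerSeries (Fin 2) R := ![X 0 - X 1, X 1]
  let xZero : Fin 2 → MvPowerSeries (Fin 2) R :=
    Function.update (1 : Fin 2 → R) 0 0 • X
  have hshear : HasSubst shear := hasSubst_of_constantCoeff_zero fun s => by
    fin_cases s <;> simp [shear]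
  have hunshear : HasSubst unshear := hasSubst_of_constantCoeff_zero fun s => by
    fin_cases s <;> simp [unshear]
  have hxZero : HasSubst xZero := HasSubst.smul_X _
  have hsheared : rescale (Function.update 1 0 0) (subst shear w) = 0 := by
    have hfam : (fun s => subst xZero (shear s)) = fun _ => X 1 := by
      funext s
      fin_cases s <;> simp [shear, xZero, subst_add hxZero, subst_X hxZero]
    rw [rescale_eq_subst, subst_comp_subst_apply hshear hxZero, hfam,
      subst_const_X_eq_subst_diag, hw, ← coe_substAlgHom (hasSubst_const_X 1), map_zero]
  obtain ⟨c, hc⟩ : X 0 ∣ subst shear w := by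
    have := X_dvd_sub_rescale_update_zero (subst shear w) 0
    rwa [hsheared, sub_zero] at this
  have hinv : (fun s => subst unshear (shear s)) = X := by
    funext s
    fin_cases s <;> simp [shear, unshear, subst_add hunshear, subst_X hunshear]
  refine ⟨subst unshear c, ?_⟩
  calc w = subst unshear (subst shear w) := by
        rw [subst_comp_subst_apply hshear hunshear, hinv, subst_self, id]
    _ = _ := by rw [hc, subst_mul hunshear, subst_X hunshear]; rfl

theorem swap_X_zero : swap (X 0 : MvPowerSeries (Fin 2) R) = X 1 := by
  rw [swap_apply, subst_X HasSubst.X_X]; rfl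

theorem swap_X_one : swap (X 1 : MvPowerSeries (Fin 2) R) = X 0 := by
  rw [swap_apply, subst_X HasSubst.X_X]; rfl

theorem isUnit_of_eq_X_sub_X_mul {u a : MvPowerSeries (Fin 2) R} (hu : u = (X 0 - X 1) * a)
    (hx : subst (![X 0, 0] : Fin 2 → MvPowerSeries (Fin 2) R) u = X 0) : IsUnit a := by
  have hW : HasSubst (![X 0, 0] : Fin 2 → MvPowerSeries (Fin 2) R) := HasSubst.X_zero
  have hxa : rescale (Function.update 1 1 0) a = 1 := by
    rw [hu, subst_mul hW, subst_sub hW, subst_X hW, subst_X hW] at hx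
    have h : (X 0 : MvPowerSeries (Fin 2) R) * rescale (Function.update 1 1 0) a = X 0 * 1 := by
      rw [rescale_update_one_zero_eq_subst, mul_one]
      simpa using hx
    exact (mul_cancel_left_mem_nonZeroDivisors (X_mem_nonzeroDivisors (R := R))).mp h
  obtain ⟨b, hb⟩ := X_dvd_sub_rescale_update_zero a 1
  rw [hxa, sub_eq_iff_eq_add] at hb
  rw [isUnit_iff_constantCoeff, hb]
  simp

theorem mul_swap_dvd_mul_swap_add_swap_mul {u : MvPowerSeries (Fin 2) R} (hdiag : diag u = 0)
    (hx : subst (![X 0, 0] : Fin 2 → MvPowerSeries (Fin 2) R) u = X 0)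
    (f : MvPowerSeries (Fin 2) R) :
    u * swap u ∣ f * swap u + swap f * u := by
  obtain ⟨a, ha⟩ := X_sub_X_dvd_of_diag_eq_zero hdiag
  have hswap : swap u = (X 1 - X 0) * swap a := by
    rw [ha, map_mul, map_sub, swap_X_zero, swap_X_one]
  obtain ⟨c, hc⟩ : X 0 - X 1 ∣ swap f * a - f * swap a :=
    X_sub_X_dvd_of_diag_eq_zero (by simp only [map_sub, map_mul, diag_swap, sub_self])
  obtain ⟨t, ht⟩ := ((isUnit_of_eq_X_sub_X_mul ha hx).mul
    ((isUnit_of_eq_X_sub_X_mul ha hx).map swap)).exists_right_inv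
  refine ⟨-(t * c), ?_⟩
  rw [hswap, ha]
  linear_combination (X 0 - X 1 : MvPowerSeries (Fin 2) R) * hc
    - (X 0 - X 1 : MvPowerSeries (Fin 2) R) ^ 2 * c * ht

end TwoVariables

end MvPowerSeries

section FormalDifference

variable {R : Type*} [CommRing R] {F : MvPowerSeries (Fin 2) R} {ι : PowerSeries R}

theorem constantCoeff_X_subst_const_X (hι : PowerSeries.constantCoeff ι = 0) (i j s : Fin 2) :
    constantCoeff ((![X i, subst (fun _ => X j) ι] : Fin 2 → MvPowerSeries (Fin 2) R) s) = 0 := by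
  fin_cases s
  · exact constantCoeff_X i
  · exact constantCoeff_subst_eq_zero (hasSubst_const_X j) (fun _ => constantCoeff_X j) hι

theorem substSeries_X_substSeries_const_X (hι : PowerSeries.constantCoeff ι = 0) (i j : Fin 2) :
    substSeries ![X i, substSeries (fun _ : Unit => (X j : MvPowerSeries (Fin 2) R)) ι] F =
      subst ![X i, subst (fun _ => (X j : MvPowerSeries (Fin 2) R)) ι] F := by
  rw [substSeries_eq_subst fun _ => constantCoeff_X j,
    substSeries_eq_subst (constantCoeff_X_subst_const_X hι i j)]

theorem subst_fDiff (hι : PowerSeries.constantCoeff ι = 0) {τ : Type*}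
    {b : Fin 2 → MvPowerSeries τ R} (hb : HasSubst b) :
    subst b (fDiff F ι) = subst ![b 0, subst (fun _ => b 1) ι] F := by
  rw [fDiff, substSeries_X_substSeries_const_X hι, subst_comp_subst_apply
    (hasSubst_of_constantCoeff_zero (constantCoeff_X_subst_const_X hι 0 1)) hb]
  congr 1
  funext s
  fin_cases s
  · exact subst_X hb 0
  · show subst b (subst (fun _ => X 1) ι) = _
    rw [subst_comp_subst_apply (hasSubst_const_X 1) hb]
    simp only [subst_X hb]
    rfl

theorem swap_fDiff (hι : PowerSeries.constantCoeff ι = 0) : swap (fDiff F ι) = fDiffSwap F ι := by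
  rw [swap_apply, subst_fDiff hι HasSubst.X_X, fDiffSwap, substSeries_X_substSeries_const_X hι]
  rfl

theorem diag_fDiff (hι : IsFormalInverse F ι) : diag (fDiff F ι) = 0 := by
  have hfam : ∀ s, constantCoeff ((![PowerSeries.X, ι] : Fin 2 → PowerSeries R) s) = 0 := by
    intro s
    fin_cases s
    exacts [PowerSeries.constantCoeff_X, hι.1]
  have hid : subst (fun _ => PowerSeries.X) ι = ι := congrFun subst_self ι
  rw [diag_apply, subst_fDiff hι.1 hasSubst_diag, hid, ← hι.2, substSeries_eq_subst hfam]

theorem subst_fDiff_zero_right (hF : IsFormalGroupLaw R F)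
    (hι : PowerSeries.constantCoeff ι = 0) :
    subst (![X 0, 0] : Fin 2 → MvPowerSeries (Fin 2) R) (fDiff F ι) = X 0 := by
  have h0 : subst (fun _ => (![X 0, 0] : Fin 2 → MvPowerSeries (Fin 2) R) 1) ι = 0 :=
    subst_zero_of_constantCoeff_zero hι
  rw [subst_fDiff hι HasSubst.X_zero, h0]
  conv_rhs => rw [← hF.subst_zero_right, substSeries_eq_subst fun s => by fin_cases s <;> simp]
  rfl

end FormalDifference

/-- Let `F` be a one-dimensional commutative formal group law over `R`
with formal inverse `ι`, and let `σ` be the swap of the two variables of `R[[x,y]]`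
(realized by substituting `(y, x)`). Then for every `f ∈ R[[x,y]]` the element
`f·(y -_F x) + σ(f)·(x -_F y)` is divisible by `(x -_F y)·(y -_F x)`: the formal divided
difference operator `C(f) = f/(x -_F y) + σ(f)/(y -_F x)` maps power series to power
series. -/
theorem fgl_divided_difference_integral {R : Type*} [CommRing R]
    (F : MvPowerSeries (Fin 2) R) (hF : IsFormalGroupLaw R F)
    (ι : PowerSeries R) (hι : IsFormalInverse F ι) :
    ∀ f : MvPowerSeries (Fin 2) R,
      (fDiff F ι * fDiffSwap F ι) ∣
        (f * fDiffSwap F ι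
          + MvPowerSeries.substSeries (![X 1, X 0] : Fin 2 → MvPowerSeries (Fin 2) R) f
            * fDiff F ι) := by
  intro f
  rw [substSeries_eq_subst (fun s => by fin_cases s <;> simp), ← swap_apply, ← swap_fDiff hι.1]
  exact mul_swap_dvd_mul_swap_add_swap_mul (diag_fDiff hι) (subst_fDiff_zero_right hF hι.1) f
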